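/- Let a ∈ (ZMod 3)^4 and let D be a set of 10 points forming 5 pairs {d_i, d_i'} with a + d_i + d_i' = 0, such that D is a cap. Then D is a demicap (no four of the five lines lie in a common affine hyperplane through a) if and only if for every point b ∉ D ∪ {a}, there is at most one unordered pair {x,y} ⊆ D with b + x + y = 0. -/

import Mathlib

abbrev V4 := Fin 4 → ZMod 3

def IsCap (C : Set V4) : Prop :=
  ∀ a ∈ C, ∀ b ∈ C, ∀ c ∈ C, a ≠ b → a ≠ c → b ≠ c → a + b + c ≠ 0

/-!
Put `e i = d i - a`, so that `D = {a + e i, a - e i}` and, since `3 • a = 0`, three points of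
`D` sum to zero exactly when the corresponding vectors `± e i` do. Hence `|D| = 10` and the cap
condition say that any three of the `e i` are linearly independent, while the demicap condition
says that any four are. A line through `b ≠ a` meeting `D` in `a + σ • e i` and `a + τ • e j`
records the value `σ • e i + τ • e j = a - b` of a linear combination with two-element support,
so "at most one such line through each `b`" says that these combinations take distinct values.
Given independence of triples, that is independence of quadruples: a dependency among four of
the `e i` is exactly a coincidence of two such combinations.
-/

open Finset Finsupp Module

section LinearCombination

variable {R V ι : Type*} [Ring R] [AddCommGroup V] [Module R V] {e : ι → V}

theorem eq_of_linearCombination_eq {m n : ℕ}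
    (h : ∀ s : Finset ι, #s ≤ m + n → LinearIndepOn R e s) {f g : ι →₀ R}
    (hf : #f.support ≤ m) (hg : #g.support ≤ n)
    (hfg : linearCombination R e f = linearCombination R e g) : f = g := by
  classical
  have hsupp : f - g ∈ supported R R ↑(f.support ∪ g.support) :=
    (mem_supported R _).2 (by exact_mod_cast support_sub)
  exact sub_eq_zero.1 <| linearIndepOn_iff.1 (h _ ((card_union_le _ _).trans (by omega))) _ hsupp
    (by rw [map_sub, hfg, sub_self])

theorem forall_linearIndepOn_card_eq_iff_injOn {n : ℕ}
    (h : ∀ s : Finset ι, #s < 2 * n → LinearIndepOn R e s) :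
    (∀ s : Finset ι, #s = 2 * n → LinearIndepOn R e s) ↔
      Set.InjOn (linearCombination R e) {f | #f.support = n} := by
  classical
  constructor
  · intro h2n f hf g hg hfg
    refine eq_of_linearCombination_eq (fun s hs => ?_) (le_of_eq hf) (le_of_eq hg) hfg
    rcases (by omega : #s < 2 * n ∨ #s = 2 * n) with hs | hs
    exacts [h s hs, h2n s hs]
  · intro hinj s hs
    by_contra hdep
    obtain ⟨l, hls, hl0, hl⟩ := linearDepOn_iff'.1 hdep
    have hsupp : l.support = s := by
      refine eq_of_subset_of_card_le (by exact_mod_cast (mem_supported R l).1 hls) ?_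
      by_contra! hlt
      exact hl (linearIndepOn_iff.1 (h _ (hs ▸ hlt)) l (mem_supported_support R l) hl0)
    -- split the dependency `l` into two halves with `n` terms each and the same value
    obtain ⟨A, hA, hAcard⟩ := exists_subset_card_eq (s := l.support) (n := n)
      (by rw [hsupp, hs]; omega)
    have hsplit := filter_add_filter_not l (· ∈ A)
    have hin : #(l.filter (· ∈ A)).support = n := by
      rw [support_filter, filter_mem_eq_inter, inter_eq_right.2 hA, hAcard]
    have hout : #(-l.filter (· ∉ A)).support = n := by
      rw [support_neg, support_filter, ← sdiff_eq_filter, card_sdiff_of_subset hA, hsupp, hs,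
        hAcard]
      omega
    have heq := hinj hin hout (by
      rw [map_neg, eq_neg_iff_add_eq_zero, ← map_add, hsplit, hl0])
    exact hl (by rw [← hsplit, heq, neg_add_cancel])

end LinearCombination

theorem Finsupp.graph_eq_of_support_eq_pair {ι M : Type*} [DecidableEq ι] [Zero M] [DecidableEq M]
    {f : ι →₀ M} {i j : ι} (h : f.support = {i, j}) :
    f.graph = {(i, f i), (j, f j)} := by
  rw [graph, h, map_insert, map_singleton]
  rfl

theorem Submodule.exists_le_finrank_eq {K V : Type*} [Field K] [AddCommGroup V] [Module K V]
    [FiniteDimensional K V] {p : Submodule K V} {n : ℕ} (hp : finrank K p ≤ n)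
    (hn : n ≤ finrank K V) : ∃ W : Submodule K V, p ≤ W ∧ finrank K W = n := by
  induction n, hp using Nat.le_induction with
  | base => exact ⟨p, le_rfl, rfl⟩
  | succ m _ ih =>
    obtain ⟨W, hpW, hW⟩ := ih (by omega)
    obtain ⟨v, hv⟩ := SetLike.exists_not_mem_of_ne_top W (by
      rintro rfl; rw [finrank_top] at hW; omega)
    exact ⟨W ⊔ Submodule.span K {v}, hpW.trans le_sup_left,
      by rw [finrank_sup_span_singleton hv, hW]⟩

theorem exists_finrank_eq_forall_mem_iff_not_linearIndepOn {K V ι : Type*} [Field K]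
    [AddCommGroup V] [Module K V] [FiniteDimensional K V] (e : ι → V) {s : Finset ι} {n : ℕ}
    (hs : #s = n + 1) (hn : n ≤ finrank K V) :
    (∃ W : Submodule K V, finrank K W = n ∧ ∀ i ∈ s, e i ∈ W) ↔ ¬LinearIndepOn K e s := by
  constructor
  · rintro ⟨W, hW, hmem⟩ hli
    have hle : Submodule.span K (Set.range fun i : (s : Set ι) => e i) ≤ W :=
      Submodule.span_le.2 (Set.range_subset_iff.2 fun i => hmem i i.2)
    have := Submodule.finrank_mono hle
    rw [finrank_span_eq_card hli] at this
    simp only [Finset.coe_sort_coe, Fintype.card_coe] at this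
    omega
  · intro hdep
    have hlt : Set.finrank K (Set.range fun i : (s : Set ι) => e i) < Fintype.card (s : Set ι) :=
      (finrank_range_le_card _).lt_of_ne
        fun h => hdep (linearIndependent_iff_card_eq_finrank_span.2 h.symm)
    simp only [Finset.coe_sort_coe, Fintype.card_coe, hs] at hlt
    obtain ⟨W, hle, hW⟩ := Submodule.exists_le_finrank_eq (Nat.le_of_lt_succ hlt) hn
    exact ⟨W, hW, fun i hi => hle (Submodule.subset_span ⟨⟨i, hi⟩, rfl⟩)⟩

section LinePoint

variable {R V ι : Type*} [Ring R] [AddCommGroup V] [Module R V]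

def linePoint (a : V) (e : ι → V) (x : ι × R) : V := a + x.2 • e x.1

variable (R) in
def puncturedLines (a : V) (e : ι → V) : Set V := linePoint a e '' {x : ι × R | x.2 ≠ 0}

theorem injOn_linePoint {a : V} {e : ι → V} (h : ∀ s : Finset ι, #s ≤ 2 → LinearIndepOn R e s) :
    Set.InjOn (linePoint a e) {x : ι × R | x.2 ≠ 0} := by
  rintro ⟨i, σ⟩ hσ ⟨j, τ⟩ hτ hij
  have hsingle : single i σ = single j τ :=
    eq_of_linearCombination_eq (m := 1) (n := 1) h (card_le_card support_single_subset)
      (card_le_card support_single_subset) (by simpa [linePoint] using hij)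
  simp_all [single_eq_single_iff]

end LinePoint

namespace ZMod3

theorem eq_one_or_eq_neg_one : ∀ {σ : ZMod 3}, σ ≠ 0 → σ = 1 ∨ σ = -1 := by
  decide

theorem add_eq_zero_of_ne : ∀ {σ τ : ZMod 3}, σ ≠ 0 → τ ≠ 0 → σ ≠ τ → σ + τ = 0 := by
  decide

theorem add_add_self_eq_zero {V : Type*} [AddCommGroup V] [Module (ZMod 3) V] (v : V) :
    v + v + v = 0 := by
  have h3 : (3 : ZMod 3) • v = 0 := by rw [show (3 : ZMod 3) = 0 from rfl, zero_smul]
  linear_combination (norm := module) h3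

end ZMod3

open ZMod3

section Secants

variable {V ι : Type*} [AddCommGroup V] [Module (ZMod 3) V] {a : V} {e : ι → V}

theorem range_union_range_eq_puncturedLines {d d' : ι → V} (hpair : ∀ i, a + d i + d' i = 0) :
    Set.range d ∪ Set.range d' = puncturedLines (ZMod 3) a fun i => d i - a := by
  ext x
  constructor
  · rintro (⟨i, rfl⟩ | ⟨i, rfl⟩)
    · exact ⟨(i, 1), one_ne_zero, by simp [linePoint]⟩
    · exact ⟨(i, -1), neg_ne_zero.2 one_ne_zero, by
        simp only [linePoint, neg_smul, one_smul]
        linear_combination (norm := module) -hpair i + add_add_self_eq_zero a⟩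
  · rintro ⟨⟨i, σ⟩, hσ, rfl⟩
    obtain rfl | rfl := eq_one_or_eq_neg_one hσ
    · exact Or.inl ⟨i, by simp [linePoint]⟩
    · refine Or.inr ⟨i, ?_⟩
      simp only [linePoint, neg_smul, one_smul]
      linear_combination (norm := module) hpair i - add_add_self_eq_zero a

theorem exists_secant_of_card_support_eq_two
    (h : ∀ s : Finset ι, #s < 4 → LinearIndepOn (ZMod 3) e s) {f : ι →₀ ZMod 3}
    (hf : #f.support = 2) :
    a - linearCombination (ZMod 3) e f ∉ puncturedLines (ZMod 3) a e ∧
      a - linearCombination (ZMod 3) e f ≠ a ∧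
      ∃ x ∈ puncturedLines (ZMod 3) a e, ∃ y ∈ puncturedLines (ZMod 3) a e, x ≠ y ∧
        a - linearCombination (ZMod 3) e f + x + y = 0 ∧
        linePoint a e '' (f.graph : Set (ι × ZMod 3)) = {x, y} := by
  classical
  obtain ⟨i, j, hij, hfij⟩ := card_eq_two.1 hf
  have hgraph : ∀ k ∈ f.support, (k, f k) ∈ {x : ι × ZMod 3 | x.2 ≠ 0} :=
    fun k hk => mem_support_iff.1 hk
  have hi : i ∈ f.support := by simp [hfij]
  have hj : j ∈ f.support := by simp [hfij]
  refine ⟨?_, ?_, _, ⟨_, hgraph i hi, rfl⟩, _, ⟨_, hgraph j hj, rfl⟩, ?_, ?_, ?_⟩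
  · rintro ⟨⟨k, υ⟩, -, hk⟩
    have hfk : f = single k (-υ) :=
      eq_of_linearCombination_eq (m := 2) (n := 1) (fun s hs => h s (by omega)) hf.le
        (card_le_card support_single_subset) (by
          rw [linearCombination_single]
          simp only [linePoint] at hk
          linear_combination (norm := module) hk)
    have := card_le_card (hfk ▸ support_single_subset : f.support ⊆ {k})
    rw [hf, card_singleton] at this
    omega
  · intro hb
    have hf0 : f = 0 :=
      eq_of_linearCombination_eq (m := 2) (n := 0) (fun s hs => h s (by omega)) hf.le
        (by simp) (by simpa using hb)
    simp [hf0] at hf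
  · intro hxy
    exact hij (congrArg Prod.fst <| injOn_linePoint (fun s hs => h s (by omega))
      (hgraph i hi) (hgraph j hj) hxy)
  · rw [linearCombination_apply, Finsupp.sum, hfij, sum_pair hij]
    simp only [linePoint]
    linear_combination (norm := module) add_add_self_eq_zero a
  · rw [graph_eq_of_support_eq_pair hfij]
    simp [Set.image_insert_eq]

theorem exists_finsupp_of_secant {b : V} {i j : ι} {σ τ : ZMod 3} (hσ : σ ≠ 0) (hτ : τ ≠ 0)
    (hxy : linePoint a e (i, σ) ≠ linePoint a e (j, τ))
    (hb : b + linePoint a e (i, σ) + linePoint a e (j, τ) = 0) (hba : b ≠ a) :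
    ∃ f : ι →₀ ZMod 3, #f.support = 2 ∧ linearCombination (ZMod 3) e f = a - b ∧
      linePoint a e '' (f.graph : Set (ι × ZMod 3)) =
        {linePoint a e (i, σ), linePoint a e (j, τ)} := by
  classical
  simp only [linePoint] at hb
  have hij : i ≠ j := by
    rintro rfl
    have hστ : σ + τ = 0 := add_eq_zero_of_ne hσ hτ (by rintro rfl; exact hxy rfl)
    exact hba (by linear_combination (norm := module) hb - hστ • e i - add_add_self_eq_zero a)
  have hsupp : (single i σ + single j τ).support = {i, j} := by
    rw [support_add_eq] <;> simp [support_single, hσ, hτ, hij]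
  refine ⟨single i σ + single j τ, by rw [hsupp, card_pair hij], ?_, ?_⟩
  · simp only [map_add, linearCombination_single]
    linear_combination (norm := module) hb - add_add_self_eq_zero a
  · rw [graph_eq_of_support_eq_pair hsupp]
    simp [Set.image_insert_eq, hij, hij.symm]

theorem forall_secant_unique_iff_injOn
    (h : ∀ s : Finset ι, #s < 4 → LinearIndepOn (ZMod 3) e s) :
    (∀ b : V, b ∉ puncturedLines (ZMod 3) a e → b ≠ a →
      ∀ x ∈ puncturedLines (ZMod 3) a e, ∀ y ∈ puncturedLines (ZMod 3) a e,
      ∀ x' ∈ puncturedLines (ZMod 3) a e, ∀ y' ∈ puncturedLines (ZMod 3) a e,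
        x ≠ y → x' ≠ y' → b + x + y = 0 → b + x' + y' = 0 → ({x, y} : Set V) = {x', y'}) ↔
      Set.InjOn (linearCombination (ZMod 3) e) {f | #f.support = 2} := by
  constructor
  · intro hsec f hf g hg hfg
    obtain ⟨hb, hba, x, hx, y, hy, hxy, hbxy, hfxy⟩ := exists_secant_of_card_support_eq_two h hf
    obtain ⟨-, -, x', hx', y', hy', hxy', hbxy', hgxy⟩ :=
      exists_secant_of_card_support_eq_two (a := a) h hg
    rw [← hfg] at hbxy'
    have hpoints := hsec _ hb hba x hx y hy x' hx' y' hy' hxy hxy' hbxy hbxy'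
    have hsub : ∀ f : ι →₀ ZMod 3, (f.graph : Set (ι × ZMod 3)) ⊆ {x | x.2 ≠ 0} :=
      fun f _ hx => (mem_graph_iff.1 hx).2
    rwa [← hfxy, ← hgxy, (injOn_linePoint fun s hs => h s (by omega)).image_eq_image_iff
      (hsub f) (hsub g), coe_inj, graph_inj] at hpoints
  · rintro hinj b hb hba _ ⟨⟨i, σ⟩, hσ, rfl⟩ _ ⟨⟨j, τ⟩, hτ, rfl⟩ _ ⟨⟨k, σ'⟩, hσ', rfl⟩
      _ ⟨⟨l, τ'⟩, hτ', rfl⟩ hxy hxy' hbxy hbxy'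
    obtain ⟨f, hf, hfb, hfxy⟩ := exists_finsupp_of_secant hσ hτ hxy hbxy hba
    obtain ⟨g, hg, hgb, hgxy⟩ := exists_finsupp_of_secant hσ' hτ' hxy' hbxy' hba
    rw [← hfxy, ← hgxy, hinj hf hg (hfb.trans hgb.symm)]

end Secants

theorem linearIndepOn_of_isCap {ι : Type*} {a : V4} {e : ι → V4}
    (hinj : Set.InjOn (linePoint a e) {x : ι × ZMod 3 | x.2 ≠ 0})
    (hcap : IsCap (puncturedLines (ZMod 3) a e)) (s : Finset ι) (hs : #s < 4) :
    LinearIndepOn (ZMod 3) e s := by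
  classical
  by_contra hdep
  obtain ⟨l, hls, hl0, hl⟩ := linearDepOn_iff.1 hdep
  have hmem : ∀ i ∈ l.support, (i, l i) ∈ {x : ι × ZMod 3 | x.2 ≠ 0} :=
    fun i hi => mem_support_iff.1 hi
  have hne : ∀ i ∈ l.support, ∀ j ∈ l.support, i ≠ j →
      linePoint a e (i, l i) ≠ linePoint a e (j, l j) :=
    fun i hi j hj hij h => hij (congrArg Prod.fst (hinj (hmem i hi) (hmem j hj) h))
  have hcard : #l.support < 4 :=
    (card_le_card (by exact_mod_cast (mem_supported _ l).1 hls)).trans_lt hs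
  interval_cases hk : #l.support
  · exact hl (support_eq_empty.1 (card_eq_zero.1 hk))
  · obtain ⟨i, hi⟩ := card_eq_one.1 hk
    rw [hi, sum_singleton] at hl0
    have hei : e i = 0 := (smul_eq_zero.1 hl0).resolve_left (hmem i (by simp [hi]))
    have := hinj (show (i, (1 : ZMod 3)) ∈ {x : ι × ZMod 3 | x.2 ≠ 0} from one_ne_zero)
      (show (i, (-1 : ZMod 3)) ∈ {x : ι × ZMod 3 | x.2 ≠ 0} from neg_ne_zero.2 one_ne_zero)
      (by simp [linePoint, hei])
    exact absurd (congrArg Prod.snd this) (show (1 : ZMod 3) ≠ -1 by decide)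
  · obtain ⟨i, j, hij, hi⟩ := card_eq_two.1 hk
    rw [hi, sum_pair hij] at hl0
    have := hinj (hmem i (by simp [hi]))
      (show (j, -l j) ∈ {x : ι × ZMod 3 | x.2 ≠ 0} from neg_ne_zero.2 (hmem j (by simp [hi])))
      (by simp only [linePoint, neg_smul]; linear_combination (norm := module) hl0)
    exact hij (congrArg Prod.fst this)
  · obtain ⟨i, j, k, hij, hik, hjk, hi⟩ := card_eq_three.1 hk
    rw [hi, sum_insert (by simp [hij, hik]), sum_pair hjk] at hl0
    have hi' : i ∈ l.support := by simp [hi]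
    have hj' : j ∈ l.support := by simp [hi]
    have hk' : k ∈ l.support := by simp [hi]
    exact hcap _ ⟨_, hmem i hi', rfl⟩ _ ⟨_, hmem j hj', rfl⟩ _ ⟨_, hmem k hk', rfl⟩
      (hne i hi' j hj' hij) (hne i hi' k hk' hik) (hne j hj' k hk' hjk)
      (by simp only [linePoint]; linear_combination (norm := module) hl0 + add_add_self_eq_zero a)

theorem demicap_iff_at_most_one_line (a : V4) (d d' : Fin 5 → V4)
    (hpair : ∀ i, a + d i + d' i = 0)
    (D : Set V4) (hD : D = Set.range d ∪ Set.range d')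
    (hcard : D.ncard = 10) (hcap : IsCap D) :
    (¬ ∃ s : Finset (Fin 5), s.card = 4 ∧
        ∃ W : Submodule (ZMod 3) V4, Module.finrank (ZMod 3) W = 3 ∧
          ∀ i ∈ s, d i - a ∈ W) ↔
      ∀ b : V4, b ∉ D → b ≠ a →
        ∀ x ∈ D, ∀ y ∈ D, ∀ x' ∈ D, ∀ y' ∈ D,
          x ≠ y → x' ≠ y' → b + x + y = 0 → b + x' + y' = 0 →
            ({x, y} : Set V4) = {x', y'} := by
  set e : Fin 5 → V4 := fun i => d i - a
  have hDe : D = puncturedLines (ZMod 3) a e := hD.trans (range_union_range_eq_puncturedLines hpair)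
  have hinj : Set.InjOn (linePoint a e) {x : Fin 5 × ZMod 3 | x.2 ≠ 0} := by
    refine (Set.ncard_image_iff (Set.toFinite _)).1 ?_
    rw [← puncturedLines, ← hDe, hcard, Set.ncard_eq_toFinset_card']
    rfl
  have hindep := linearIndepOn_of_isCap hinj (hDe ▸ hcap)
  rw [hDe, forall_secant_unique_iff_injOn hindep,
    ← forall_linearIndepOn_card_eq_iff_injOn (n := 2) hindep]
  refine not_exists.trans (forall_congr' fun s => not_and.trans (imp_congr_right fun hs => ?_))
  exact not_iff_comm.1 (exists_finrank_eq_forall_mem_iff_not_linearIndepOn e hs (by simp)).symm
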